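/- (Explicit solution of the shifted wave equation on a homogeneous tree.) Let u solve the Cauchy problem for the shifted wave equation on T_q with data f, g : T_q → ℂ. Then u(x,n) = (C_n f)(x) + (S_n g)(x) for all x ∈ T_q and n ∈ ℤ; explicitly, for n ≠ 0, u(x,n) = (1/2)·q^(−|n|/2)·Σ_{y : d(y,x) = |n|} f(y) − ((q−1)/2)·q^(−|n|/2)·Σ_{y : d(y,x) < |n|, |n|−d(y,x) even} f(y) + sign(n)·q^(−(|n|−1)/2)·Σ_{y : d(y,x) < |n|, |n|−d(y,x) odd} g(y). -/

import Mathlib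

open scoped BigOperators

/-- A homogeneous tree of degree `q + 1`: a connected acyclic simple graph in which
every vertex has exactly `q + 1` neighbours. Spheres for the graph distance are finite. -/
structure HomTree (q : ℕ) where
  V : Type
  G : SimpleGraph V
  conn : G.Connected
  acyclic : G.IsAcyclic
  sphereFin : ∀ (x : V) (n : ℕ), {y : V | G.dist x y = n}.Finite
  nbrFin : ∀ x : V, {y : V | G.Adj x y}.Finite
  degree : ∀ x : V, (nbrFin x).toFinset.card = q + 1

namespace HomTree

variable {q : ℕ}

/-- The sphere `S(x,n)` as a finite set. -/
noncomputable def sphere (T : HomTree q) (x : T.V) (n : ℕ) : Finset T.V :=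
  (T.sphereFin x n).toFinset

/-- The volume `δ(n)` of spheres. -/
def delta (q n : ℕ) : ℕ := if n = 0 then 1 else (q + 1) * q ^ (n - 1)

/-- The combinatorial Laplacian on the tree. -/
noncomputable def lap (T : HomTree q) (f : T.V → ℂ) (x : T.V) : ℂ :=
  f x - (1 / ((q : ℂ) + 1)) * ∑ y ∈ T.sphere x 1, f y

/-- Spherical means. -/
noncomputable def sphMean (T : HomTree q) (f : T.V → ℂ) (x : T.V) (n : ℕ) : ℂ :=
  (1 / (delta q n : ℂ)) * ∑ y ∈ T.sphere x n, f y

/-- Real powers of `q`, as a complex number. -/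
noncomputable def qpow (q : ℕ) (x : ℝ) : ℂ := (((q : ℝ) ^ x : ℝ) : ℂ)

/-- `γ = 2 / (q^{1/2} + q^{-1/2})`. -/
noncomputable def gam (q : ℕ) : ℝ := 2 / ((q : ℝ) ^ ((1 : ℝ)/2) + (q : ℝ) ^ (-(1 : ℝ)/2))

/-- The combinatorial Laplacian on `ℤ`. -/
noncomputable def lapZ (φ : ℤ → ℂ) (m : ℤ) : ℂ := φ m - (φ (m + 1) + φ (m - 1)) / 2

lemma ball_finite (T : HomTree q) (x : T.V) (n : ℕ) :
    {y : T.V | T.G.dist x y ≤ n}.Finite := by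
  have h : {y : T.V | T.G.dist x y ≤ n} ⊆ ⋃ m ∈ Set.Iic n, {y : T.V | T.G.dist x y = m} := by
    intro y hy
    exact Set.mem_biUnion hy rfl
  exact (((Set.finite_Iic n)).biUnion fun m _ => T.sphereFin x m).subset h

/-- The ball `B(x,n)` as a finite set. -/
noncomputable def ball (T : HomTree q) (x : T.V) (n : ℕ) : Finset T.V :=
  (T.ball_finite x n).toFinset

/-- The operator `M_n` (with `M_n = 0` for `n < 0`). -/
noncomputable def Mop (T : HomTree q) (n : ℤ) (f : T.V → ℂ) (x : T.V) : ℂ :=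
  if 0 ≤ n then
    qpow q (-(n : ℝ) / 2) *
      ∑ y ∈ (T.ball x n.toNat).filter (fun y => (n.toNat - T.G.dist x y) % 2 = 0), f y
  else 0

/-- The operator `C_n = (M_{|n|} - M_{|n|-2})/2`, `C_0 = Id`. -/
noncomputable def Cop (T : HomTree q) (n : ℤ) (f : T.V → ℂ) (x : T.V) : ℂ :=
  if n = 0 then f x else (Mop T |n| f x - Mop T (|n| - 2) f x) / 2

/-- The operator `S_n = sign(n) · M_{|n|-1}`. -/
noncomputable def Sop (T : HomTree q) (n : ℤ) (g : T.V → ℂ) (x : T.V) : ℂ :=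
  (n.sign : ℂ) * Mop T (|n| - 1) g x

/-- `u` solves the shifted wave equation on the tree. -/
def IsWaveSol (T : HomTree q) (u : T.V → ℤ → ℂ) : Prop :=
  ∀ (x : T.V) (n : ℤ),
    u x (n + 1) + u x (n - 1) = qpow q (-(1 : ℝ)/2) * ∑ y ∈ T.sphere x 1, u y n

/-- `u` solves the Cauchy problem for the shifted wave equation with data `f`, `g`. -/
def IsCauchy (T : HomTree q) (f g : T.V → ℂ) (u : T.V → ℤ → ℂ) : Prop :=
  IsWaveSol T u ∧ (∀ x, u x 0 = f x) ∧ ∀ x, (u x 1 - u x (-1)) / 2 = g x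

/-- Kinetic energy. -/
noncomputable def kinetic (T : HomTree q) (u : T.V → ℤ → ℂ) (n : ℤ) : ℝ :=
  (1/2) * ∑' x : T.V, ‖(u x (n + 1) - u x (n - 1)) / 2‖ ^ 2

/-- Potential energy. -/
noncomputable def potential (T : HomTree q) (u : T.V → ℤ → ℂ) (n : ℤ) : ℝ :=
  (1 / (4 * (q : ℝ))) * ∑' p : T.V × T.V,
      (if T.G.dist p.1 p.2 = 2 then ‖(u p.1 n - u p.2 n) / 2‖ ^ 2 else 0)
    - (((q : ℝ) - 1) ^ 2 / (8 * (q : ℝ))) * ∑' x : T.V, ‖u x n‖ ^ 2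

/-- The two-step Laplacian. -/
noncomputable def lap2 (T : HomTree q) (f : T.V → ℂ) (x : T.V) : ℂ :=
  f x - (1 / ((q : ℂ) * ((q : ℂ) + 1))) * ∑ y ∈ T.sphere x 2, f y

end HomTree

/-!
For `n ≥ 0` the operators `M_n` satisfy `M_{n+1} + M_{n-1} = q^{-1/2} ∑_{z ∼ x} M_n`: `M_n` is
convolution with a radial kernel, and of the `q + 1` neighbours of `x` exactly one is closer to a
given `y ≠ x` while the other `q` are farther, so the neighbour sum of the kernel of `M_n` is a
combination of the kernels of `M_{n ± 1}`. The recursion fails only at `n = -1`, hence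
`n ↦ M_n - M_{-n-2}` solves the wave equation on all of `ℤ`. Both `C_n` and `S_n` are
combinations of its time translates, so `C_n f + S_n g` solves the Cauchy problem; a solution is
determined by its values at times `0` and `1`, and these are determined by the Cauchy data.
-/

namespace SimpleGraph

variable {V : Type*} {G : SimpleGraph V}

theorem Reachable.exists_adj_dist_add_one_eq {x y : V} (hr : G.Reachable x y) (hxy : x ≠ y) :
    ∃ z, G.Adj x z ∧ G.dist z y + 1 = G.dist x y := by
  obtain ⟨p, -, hp⟩ := hr.exists_path_of_dist
  cases p with
  | nil => exact absurd rfl hxy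
  | cons hadj q =>
    refine ⟨_, hadj, le_antisymm ?_ ?_⟩
    · have := G.dist_le q
      simp only [Walk.length_cons] at hp
      omega
    · have := (hadj.reachable.symm.trans hr).dist_triangle_right x
      rw [dist_eq_one_iff_adj.mpr hadj] at this
      omega

theorem IsAcyclic.eq_of_adj_of_dist_add_one_eq (hG : G.IsAcyclic) {x y z w : V}
    (hz : G.Adj x z) (hw : G.Adj x w) (hzy : G.dist z y + 1 = G.dist x y)
    (hwy : G.dist w y + 1 = G.dist x y) : z = w := by
  classical
  have hxy : G.Reachable x y := Reachable.of_dist_ne_zero (by omega)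
  have extend : ∀ {v : V} (hv : G.Adj x v), G.dist v y + 1 = G.dist x y →
      ∃ p : G.Walk v y, (Walk.cons hv p).IsPath := by
    intro v hv hvy
    obtain ⟨p, hp, hpl⟩ := (hv.reachable.symm.trans hxy).exists_path_of_dist
    refine ⟨p, hp.cons fun hx => ?_⟩
    have := (G.dist_le (p.dropUntil x hx)).trans (p.length_dropUntil_le_length hx)
    omega
  obtain ⟨p, hp⟩ := extend hz hzy
  obtain ⟨r, hr⟩ := extend hw hwy
  have := (hG.subsingleton_path x y).elim ⟨_, hp⟩ ⟨_, hr⟩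
  simpa using congrArg (fun s : G.Path x y => s.1.snd) this

theorem IsTree.sum_neighbor_dist {M : Type*} [AddCommMonoid M] (hG : G.IsTree) {x y : V}
    (hxy : x ≠ y) {N : Finset V} (hN : ∀ z, z ∈ N ↔ G.Adj x z) (φ : ℕ → M) :
    ∑ z ∈ N, φ (G.dist z y) = φ (G.dist x y - 1) + (N.card - 1) • φ (G.dist x y + 1) := by
  classical
  obtain ⟨z₀, hz₀, hz₀y⟩ := (hG.connected x y).exists_adj_dist_add_one_eq hxy
  have hfar : ∀ z ∈ N.erase z₀, G.dist z y = G.dist x y + 1 := by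
    intro z hz
    obtain ⟨hne, hz⟩ := Finset.mem_erase.mp hz
    have hadj := (hN z).1 hz
    have hxy := G.dist_comm (u := x) (v := y)
    have hzy := G.dist_comm (u := z) (v := y)
    rcases hG.dist_eq_dist_add_one_of_adj y hadj with h | h
    · exact absurd (hG.isAcyclic.eq_of_adj_of_dist_add_one_eq hadj hz₀ (by omega) hz₀y) hne
    · omega
  rw [← Finset.add_sum_erase N _ ((hN z₀).2 hz₀),
    Finset.sum_congr rfl fun z hz => congrArg φ (hfar z hz), Finset.sum_const,
    Finset.card_erase_of_mem ((hN z₀).2 hz₀), ← hz₀y, Nat.add_sub_cancel]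

end SimpleGraph

namespace HomTree

variable {q : ℕ} (T : HomTree q)

theorem isTree : T.G.IsTree := ⟨T.conn, T.acyclic⟩

@[simp]
theorem mem_sphere {x y : T.V} {n : ℕ} : y ∈ T.sphere x n ↔ T.G.dist x y = n :=
  Set.Finite.mem_toFinset _

@[simp]
theorem mem_ball {x y : T.V} {n : ℕ} : y ∈ T.ball x n ↔ T.G.dist x y ≤ n :=
  Set.Finite.mem_toFinset _

theorem mem_sphere_one {x z : T.V} : z ∈ T.sphere x 1 ↔ T.G.Adj x z := by
  simp [SimpleGraph.dist_eq_one_iff_adj]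

theorem card_sphere_one (x : T.V) : (T.sphere x 1).card = q + 1 := by
  rw [← T.degree x]
  congr 1
  ext z
  simp [SimpleGraph.dist_eq_one_iff_adj]

theorem sum_sphere_one_dist_self {M : Type*} [AddCommMonoid M] (x : T.V) (φ : ℕ → M) :
    ∑ z ∈ T.sphere x 1, φ (T.G.dist z x) = (q + 1) • φ 1 := by
  rw [Finset.sum_congr rfl fun z hz => congrArg φ (T.G.dist_comm.trans (T.mem_sphere.1 hz)),
    Finset.sum_const, card_sphere_one]

theorem sum_sphere_one_dist_of_ne {M : Type*} [AddCommMonoid M] {x y : T.V} (hxy : x ≠ y)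
    (φ : ℕ → M) :
    ∑ z ∈ T.sphere x 1, φ (T.G.dist z y) =
      φ (T.G.dist x y - 1) + q • φ (T.G.dist x y + 1) := by
  rw [T.isTree.sum_neighbor_dist hxy (fun z => T.mem_sphere_one) φ, card_sphere_one,
    Nat.add_sub_cancel]

theorem qpow_add (hq : 0 < q) (a b : ℝ) : qpow q (a + b) = qpow q a * qpow q b := by
  simp only [qpow, Real.rpow_add (Nat.cast_pos.2 hq), Complex.ofReal_mul]

theorem qpow_one : qpow q 1 = q := by
  simp [qpow]

theorem qpow_neg_half_mul (hq : 0 < q) (n : ℤ) :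
    qpow q (-1 / 2) * qpow q (-(n : ℝ) / 2) = qpow q (-((n + 1 : ℤ) : ℝ) / 2) := by
  rw [← qpow_add hq]
  congr 1
  push_cast
  ring

theorem qpow_neg_half_mul_mul (hq : 0 < q) (n : ℤ) :
    qpow q (-1 / 2) * (q * qpow q (-(n : ℝ) / 2)) = qpow q (-((n - 1 : ℤ) : ℝ) / 2) := by
  rw [← qpow_one, ← qpow_add hq, ← qpow_add hq]
  congr 1
  push_cast
  ring

noncomputable def mKernel (q : ℕ) (n : ℤ) (d : ℕ) : ℂ :=
  if 0 ≤ n ∧ (d : ℤ) ≤ n ∧ (n - d) % 2 = 0 then qpow q (-(n : ℝ) / 2) else 0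

theorem mKernel_succ_add_mKernel_pred_zero (hq : 0 < q) {n : ℤ} (hn : n ≠ -1) :
    mKernel q (n + 1) 0 + mKernel q (n - 1) 0 = qpow q (-1 / 2) * ((q + 1) * mKernel q n 1) := by
  have e₁ := qpow_neg_half_mul hq n
  have e₂ := qpow_neg_half_mul_mul hq n
  simp only [mKernel]
  split_ifs <;> first | omega | ring1 | linear_combination -e₁ - e₂

theorem mKernel_succ_add_mKernel_pred (hq : 0 < q) (n : ℤ) {d : ℕ} (hd : d ≠ 0) :
    mKernel q (n + 1) d + mKernel q (n - 1) d =
      qpow q (-1 / 2) * (mKernel q n (d - 1) + q * mKernel q n (d + 1)) := by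
  have e₁ := qpow_neg_half_mul hq n
  have e₂ := qpow_neg_half_mul_mul hq n
  simp only [mKernel]
  split_ifs <;> first | omega | ring1 | linear_combination -e₁ - e₂ | linear_combination -e₁

theorem sum_sphere_one_mKernel (hq : 0 < q) {n : ℤ} (hn : n ≠ -1) (x y : T.V) :
    qpow q (-1 / 2) * ∑ z ∈ T.sphere x 1, mKernel q n (T.G.dist z y) =
      mKernel q (n + 1) (T.G.dist x y) + mKernel q (n - 1) (T.G.dist x y) := by
  by_cases hxy : x = y
  · subst hxy
    rw [sum_sphere_one_dist_self, SimpleGraph.dist_self, nsmul_eq_mul, Nat.cast_succ,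
      mKernel_succ_add_mKernel_pred_zero hq hn]
  · rw [sum_sphere_one_dist_of_ne T hxy, nsmul_eq_mul,
      mKernel_succ_add_mKernel_pred hq n ((T.conn.dist_eq_zero_iff).not.2 hxy)]

theorem Mop_eq_sum_mKernel (n : ℤ) (h : T.V → ℂ) (x : T.V) {s : Finset T.V}
    (hs : T.ball x n.toNat ⊆ s) :
    Mop T n h x = ∑ y ∈ s, mKernel q n (T.G.dist x y) * h y := by
  have hout : ∀ y ∈ s, y ∉ T.ball x n.toNat → mKernel q n (T.G.dist x y) * h y = 0 := by
    intro y _ hy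
    rw [mem_ball] at hy
    rw [mKernel, if_neg (by omega), zero_mul]
  rw [← Finset.sum_subset hs hout, Mop]
  split_ifs with hn
  · rw [Finset.mul_sum, Finset.sum_filter]
    refine Finset.sum_congr rfl fun y hy => ?_
    rw [mem_ball] at hy
    simp only [mKernel]
    split_ifs <;> first | omega | ring1
  · exact (Finset.sum_eq_zero fun y _ => by simp [mKernel, hn]).symm

theorem Mop_of_neg {n : ℤ} (hn : n < 0) (h : T.V → ℂ) (x : T.V) : Mop T n h x = 0 :=
  if_neg (by omega)

theorem Mop_zero (h : T.V → ℂ) (x : T.V) : Mop T 0 h x = h x := by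
  rw [T.Mop_eq_sum_mKernel 0 h x (s := {x})]
  · simp [mKernel, qpow]
  · intro y hy
    rw [mem_ball, Int.toNat_zero, Nat.le_zero, T.conn.dist_eq_zero_iff] at hy
    simp [hy]

theorem Mop_succ_add_Mop_pred (hq : 0 < q) {n : ℤ} (hn : n ≠ -1) (h : T.V → ℂ) (x : T.V) :
    Mop T (n + 1) h x + Mop T (n - 1) h x =
      qpow q (-1 / 2) * ∑ z ∈ T.sphere x 1, Mop T n h z := by
  set B := T.ball x (n.toNat + 1)
  have hB : ∀ z ∈ T.sphere x 1,
      Mop T n h z = ∑ y ∈ B, mKernel q n (T.G.dist z y) * h y := by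
    intro z hz
    refine T.Mop_eq_sum_mKernel n h z fun y hy => ?_
    rw [mem_sphere] at hz
    rw [mem_ball] at hy ⊢
    have := T.conn.dist_triangle (u := x) (v := z) (w := y)
    omega
  rw [Finset.sum_congr rfl hB, Finset.sum_comm, Finset.mul_sum,
    T.Mop_eq_sum_mKernel (n + 1) h x (s := B) fun y hy => by rw [mem_ball] at hy ⊢; omega,
    T.Mop_eq_sum_mKernel (n - 1) h x (s := B) fun y hy => by rw [mem_ball] at hy ⊢; omega,
    ← Finset.sum_add_distrib]
  refine Finset.sum_congr rfl fun y _ => ?_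
  rw [← Finset.sum_mul, ← mul_assoc, T.sum_sphere_one_mKernel hq hn, add_mul]

/-- Equals `M_n h` for `n ≥ 0` and `-M_{-n-2} h` for `n ≤ -2`, since `M_n = 0` for `n < 0`. -/
noncomputable def oddM (h : T.V → ℂ) (x : T.V) (n : ℤ) : ℂ :=
  Mop T n h x - Mop T (-n - 2) h x

theorem isWaveSol_oddM (hq : 0 < q) (h : T.V → ℂ) : IsWaveSol T (T.oddM h) := by
  intro x n
  simp only [oddM, Finset.sum_sub_distrib, mul_sub]
  by_cases hn : n = -1
  · rw [show -(n + 1) - 2 = n - 1 by omega, show -(n - 1) - 2 = n + 1 by omega,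
      show -n - 2 = n by omega]
    ring
  · have h₁ := T.Mop_succ_add_Mop_pred hq hn h x
    have h₂ := T.Mop_succ_add_Mop_pred hq (n := -n - 2) (by omega) h x
    rw [show -n - 2 + 1 = -(n - 1) - 2 by ring, show -n - 2 - 1 = -(n + 1) - 2 by ring] at h₂
    linear_combination h₁ - h₂

theorem Cop_eq_oddM (f : T.V → ℂ) (x : T.V) (n : ℤ) :
    Cop T n f x = (T.oddM f x n - T.oddM f x (n - 2)) / 2 := by
  simp only [Cop, oddM]
  rcases lt_trichotomy n 0 with hn | rfl | hn
  · rw [if_neg hn.ne, abs_of_neg hn, T.Mop_of_neg hn, T.Mop_of_neg (by omega : n - 2 < 0),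
      show -(n - 2) - 2 = -n by ring]
    ring
  · rw [if_pos rfl, show (-0 - 2 : ℤ) = -2 by norm_num, show (0 - 2 : ℤ) = -2 by norm_num,
      show (-(-2) - 2 : ℤ) = 0 by norm_num, T.Mop_zero,
      T.Mop_of_neg (by norm_num : (-2 : ℤ) < 0)]
    ring
  · rw [if_neg hn.ne', abs_of_pos hn, T.Mop_of_neg (by omega : -n - 2 < 0),
      T.Mop_of_neg (by omega : -(n - 2) - 2 < 0)]
    ring

theorem Sop_eq_oddM (g : T.V → ℂ) (x : T.V) (n : ℤ) : Sop T n g x = T.oddM g x (n - 1) := by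
  simp only [Sop, oddM]
  rcases lt_trichotomy n 0 with hn | rfl | hn
  · rw [Int.sign_eq_neg_one_of_neg hn, abs_of_neg hn, T.Mop_of_neg (by omega : n - 1 < 0),
      show -(n - 1) - 2 = -n - 1 by ring]
    push_cast
    ring
  · simp
  · rw [Int.sign_eq_one_of_pos hn, abs_of_pos hn, T.Mop_of_neg (by omega : -(n - 1) - 2 < 0)]
    push_cast
    ring

variable {T}

theorem IsWaveSol.add {u v : T.V → ℤ → ℂ} (hu : IsWaveSol T u) (hv : IsWaveSol T v) :
    IsWaveSol T fun x n => u x n + v x n := by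
  intro x n
  rw [Finset.sum_add_distrib]
  linear_combination hu x n + hv x n

theorem IsWaveSol.sub {u v : T.V → ℤ → ℂ} (hu : IsWaveSol T u) (hv : IsWaveSol T v) :
    IsWaveSol T fun x n => u x n - v x n := by
  intro x n
  rw [Finset.sum_sub_distrib]
  linear_combination hu x n - hv x n

theorem IsWaveSol.const_mul {u : T.V → ℤ → ℂ} (hu : IsWaveSol T u) (c : ℂ) :
    IsWaveSol T fun x n => c * u x n := by
  intro x n
  rw [← Finset.mul_sum]
  linear_combination c * hu x n

theorem IsWaveSol.comp_add_right {u : T.V → ℤ → ℂ} (hu : IsWaveSol T u) (k : ℤ) :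
    IsWaveSol T fun x n => u x (n + k) := by
  intro x n
  beta_reduce
  rw [show n + 1 + k = n + k + 1 by ring, show n - 1 + k = n + k - 1 by ring]
  exact hu x (n + k)

theorem IsWaveSol.ext {u v : T.V → ℤ → ℂ} (hu : IsWaveSol T u) (hv : IsWaveSol T v)
    (h₀ : ∀ x, u x 0 = v x 0) (h₁ : ∀ x, u x 1 = v x 1) : u = v := by
  have key : ∀ k : ℤ, (∀ x, u x k = v x k) ∧ ∀ x, u x (k + 1) = v x (k + 1) := by
    intro k
    induction k using Int.inductionOn' (b := 0) with
    | zero => exact ⟨h₀, h₁⟩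
    | succ k _ ih =>
      refine ⟨ih.2, fun x => ?_⟩
      have e₁ := hu x (k + 1)
      have e₂ := hv x (k + 1)
      have hs := Finset.sum_congr rfl fun y (_ : y ∈ T.sphere x 1) => ih.2 y
      rw [add_sub_cancel_right] at e₁ e₂
      linear_combination e₁ - e₂ - ih.1 x + qpow q (-1 / 2) * hs
    | pred k _ ih =>
      refine ⟨fun x => ?_, by simpa using ih.1⟩
      have hs := Finset.sum_congr rfl fun y (_ : y ∈ T.sphere x 1) => ih.1 y
      linear_combination hu x k - hv x k - ih.2 x + qpow q (-1 / 2) * hs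
  funext x n
  exact (key n).1 x

theorem IsCauchy.unique {f g : T.V → ℂ} {u v : T.V → ℤ → ℂ} (hu : IsCauchy T f g u)
    (hv : IsCauchy T f g v) : u = v := by
  obtain ⟨hu, hu₀, hu₁⟩ := hu
  obtain ⟨hv, hv₀, hv₁⟩ := hv
  refine hu.ext hv (fun x => (hu₀ x).trans (hv₀ x).symm) fun x => ?_
  have e₁ := hu x 0
  have e₂ := hv x 0
  have hs := Finset.sum_congr rfl fun y (_ : y ∈ T.sphere x 1) => (hu₀ y).trans (hv₀ y).symm
  simp only [zero_add, zero_sub] at e₁ e₂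
  linear_combination (e₁ - e₂ + qpow q (-1 / 2) * hs) / 2 + hu₁ x - hv₁ x

variable (T)

theorem isCauchy_Cop_add_Sop (hq : 0 < q) (f g : T.V → ℂ) :
    IsCauchy T f g fun x n => Cop T n f x + Sop T n g x := by
  have hf := T.isWaveSol_oddM hq f
  have hwave := ((hf.sub (hf.comp_add_right (-2))).const_mul (1 / 2)).add
    ((T.isWaveSol_oddM hq g).comp_add_right (-1))
  refine ⟨?_, fun x => by simp [Cop, Sop], fun x => by simp [Cop, Sop, Mop_zero]⟩
  convert hwave using 3 with x n
  rw [Cop_eq_oddM, Sop_eq_oddM]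
  ring_nf

theorem Cop_eq_sum (hq : 0 < q) {n : ℤ} (hn : n ≠ 0) (f : T.V → ℂ) (x : T.V) :
    Cop T n f x =
      (1 / 2 : ℂ) * qpow q (-(n.natAbs : ℝ) / 2) * (∑ y ∈ T.sphere x n.natAbs, f y)
      - (((q : ℂ) - 1) / 2) * qpow q (-(n.natAbs : ℝ) / 2) *
          ∑ y ∈ (T.ball x n.natAbs).filter
            (fun y => T.G.dist x y < n.natAbs ∧ (n.natAbs - T.G.dist x y) % 2 = 0), f y := by
  set N := n.natAbs
  have hsphere : T.sphere x N = (T.ball x N).filter fun y => T.G.dist x y = N := by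
    ext y
    simp only [mem_sphere, Finset.mem_filter, mem_ball]
    omega
  have hpow : qpow q (-(((N : ℤ) - 2 : ℤ) : ℝ) / 2) = q * qpow q (-(N : ℝ) / 2) := by
    rw [← qpow_one, ← qpow_add hq]
    congr 1
    push_cast
    ring
  rw [Cop, if_neg hn, Int.abs_eq_natAbs,
    T.Mop_eq_sum_mKernel N f x (s := T.ball x N) (by simp),
    T.Mop_eq_sum_mKernel (N - 2) f x (s := T.ball x N) fun y hy => by
      rw [mem_ball] at hy ⊢; omega,
    hsphere, Finset.sum_filter, Finset.sum_filter, Finset.mul_sum, Finset.mul_sum,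
    ← Finset.sum_sub_distrib, ← Finset.sum_sub_distrib, Finset.sum_div]
  refine Finset.sum_congr rfl fun y hy => ?_
  rw [mem_ball] at hy
  simp only [mKernel, hpow, Int.cast_natCast]
  split_ifs <;> first | omega | ring1

theorem Sop_eq_sum (n : ℤ) (g : T.V → ℂ) (x : T.V) :
    Sop T n g x =
      (n.sign : ℂ) * qpow q (-((n.natAbs : ℝ) - 1) / 2) *
        ∑ y ∈ (T.ball x n.natAbs).filter
          (fun y => T.G.dist x y < n.natAbs ∧ (n.natAbs - T.G.dist x y) % 2 = 1), g y := by
  rw [Sop, Int.abs_eq_natAbs, T.Mop_eq_sum_mKernel _ g x (s := T.ball x n.natAbs) fun y hy => by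
      rw [mem_ball] at hy ⊢; omega,
    Finset.sum_filter, mul_assoc]
  congr 1
  rw [Finset.mul_sum]
  refine Finset.sum_congr rfl fun y hy => ?_
  rw [mem_ball] at hy
  simp only [mKernel, Int.cast_sub, Int.cast_natCast, Int.cast_one]
  split_ifs <;> first | omega | ring1

end HomTree

open HomTree in
/-- explicit solution of the shifted wave equation on the tree. -/
theorem stmt9 {q : ℕ} (hq : 2 ≤ q) (T : HomTree q) (f g : T.V → ℂ)
    (u : T.V → ℤ → ℂ) (hu : HomTree.IsCauchy T f g u) :
    (∀ (x : T.V) (n : ℤ), u x n = HomTree.Cop T n f x + HomTree.Sop T n g x) ∧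
    ∀ (x : T.V) (n : ℤ), n ≠ 0 →
      u x n =
        (1/2 : ℂ) * HomTree.qpow q (-(n.natAbs : ℝ) / 2) *
            (∑ y ∈ T.sphere x n.natAbs, f y)
        - (((q : ℂ) - 1) / 2) * HomTree.qpow q (-(n.natAbs : ℝ) / 2) *
            ∑ y ∈ (T.ball x n.natAbs).filter
              (fun y => T.G.dist x y < n.natAbs ∧ (n.natAbs - T.G.dist x y) % 2 = 0), f y
        + (n.sign : ℂ) * HomTree.qpow q (-((n.natAbs : ℝ) - 1) / 2) *
            ∑ y ∈ (T.ball x n.natAbs).filter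
              (fun y => T.G.dist x y < n.natAbs ∧ (n.natAbs - T.G.dist x y) % 2 = 1), g y := by
  have hq₀ : 0 < q := by omega
  have hsol : ∀ x n, u x n = Cop T n f x + Sop T n g x := fun x n =>
    congrFun (congrFun (hu.unique (T.isCauchy_Cop_add_Sop hq₀ f g)) x) n
  exact ⟨hsol, fun x n hn => by rw [hsol, T.Cop_eq_sum hq₀ hn, T.Sop_eq_sum]⟩
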